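/- Let φ be a ONE-IN-THREE 3SAT instance over n variables and let t_h : ℝⁿ × ℝ → ℝ be the associated homogenized quartic trigonometric polynomial. Then the origin is locally asymptotically stable for the trigonometric vector field ż = −∇t_h(z) if and only if no assignment b : Fin n → {0,1} one-in-three-satisfies φ. -/

import Mathlib

noncomputable section

open Real Set Filter

/-- A literal: a variable index together with a sign (`true` = the variable itself,
`false` = its negation). -/
abbrev Lit (n : ℕ) := Fin n × Bool

/-- A clause of a ONE-IN-THREE 3SAT instance: a triple of literals. -/
abbrev Clause3 (n : ℕ) := Lit n × Lit n × Lit n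

/-- Value of a literal under a real assignment `b`. -/
def litVal {n : ℕ} (b : Fin n → ℝ) (l : Lit n) : ℝ :=
  if l.2 then b l.1 else 1 - b l.1

/-- Sum of the three literal values of a clause under a real assignment `b`. -/
def clauseVal {n : ℕ} (b : Fin n → ℝ) (c : Clause3 n) : ℝ :=
  litVal b c.1 + litVal b c.2.1 + litVal b c.2.2

/-- A boolean assignment viewed as a `{0,1}`-valued real assignment. -/
def boolToReal {n : ℕ} (b : Fin n → Bool) : Fin n → ℝ := fun i => if b i then 1 else 0

/-- `b` one-in-three-satisfies `φ`: in every clause the three literal values sum to `1`. -/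
def OneInThreeSat {n : ℕ} (b : Fin n → Bool) (φ : List (Clause3 n)) : Prop :=
  ∀ c ∈ φ, clauseVal (boolToReal b) c = 1

/-- Homogenized value of a literal at `z = (x, y) ∈ ℝⁿ × ℝ` (coordinates `0,…,n-1` are `x`,
the last coordinate is `y`): `L_{(i,true)}(z) = sin(x_i)sin(y)` and
`L_{(i,false)}(z) = sin²(y) − sin(x_i)sin(y)`. -/
def homLitVal {n : ℕ} (z : EuclideanSpace ℝ (Fin (n+1))) (l : Lit n) : ℝ :=
  if l.2 then Real.sin (z l.1.castSucc) * Real.sin (z (Fin.last n))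
  else Real.sin (z (Fin.last n)) ^ 2 - Real.sin (z l.1.castSucc) * Real.sin (z (Fin.last n))

/-- The homogenized quartic trigonometric polynomial `t_h` associated with `φ`. -/
def tHom {n : ℕ} (φ : List (Clause3 n)) (z : EuclideanSpace ℝ (Fin (n+1))) : ℝ :=
  (∑ i : Fin n,
      Real.sin (z i.castSucc) ^ 2 * (Real.sin (z (Fin.last n)) - Real.sin (z i.castSucc)) ^ 2)
    + (φ.map (fun c => (homLitVal z c.1 + homLitVal z c.2.1 + homLitVal z c.2.2
        - Real.sin (z (Fin.last n)) ^ 2) ^ 2)).sum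

/-- `x` is a solution of the ODE `x' = F(x)` on the time set `I`: a differentiable curve
whose derivative at every `t ∈ I` equals `F (x t)`. -/
def IsSolutionOn {E : Type*} [NormedAddCommGroup E] [NormedSpace ℝ E]
    (F : E → E) (x : ℝ → E) (I : Set ℝ) : Prop :=
  ∀ t ∈ I, HasDerivAt x (F (x t)) t

/-- The origin is stable in the sense of Lyapunov for `x' = F(x)`. -/
def LyapunovStable {E : Type*} [NormedAddCommGroup E] [NormedSpace ℝ E] (F : E → E) : Prop :=
  ∀ ε > (0:ℝ), ∃ δ > (0:ℝ), ∀ (T : ℝ) (x : ℝ → E),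
    IsSolutionOn F x (Set.Icc 0 T) → ‖x 0‖ < δ → ∀ t ∈ Set.Icc 0 T, ‖x t‖ < ε

/-- The origin is locally attractive for `x' = F(x)`. -/
def LocallyAttractive {E : Type*} [NormedAddCommGroup E] [NormedSpace ℝ E] (F : E → E) : Prop :=
  ∃ δ > (0:ℝ), ∀ x : ℝ → E, IsSolutionOn F x (Set.Ici 0) → ‖x 0‖ < δ →
    Filter.Tendsto x Filter.atTop (nhds 0)

/-- The origin is locally asymptotically stable for `x' = F(x)`. -/
def LAS {E : Type*} [NormedAddCommGroup E] [NormedSpace ℝ E] (F : E → E) : Prop :=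
  LyapunovStable F ∧ LocallyAttractive F

open Topology InnerProductSpace

/-!
`t_h` is a sum of squares, so its zeros are equilibria of the gradient flow. A one-in-three
assignment `b` produces the zeros `s • (b, 1)`, which accumulate at the origin, so the origin is not
attractive. Conversely, if `φ` is unsatisfiable then `t_h` has no zero other than the origin in the
ball of radius `π`, so it is a strict Lyapunov function there. Being homogeneous of degree four in
the variables `sin zₖ`, it satisfies the Euler-type bound `4 t_h ≤ ‖∇t_h‖` near the origin; along
the flow `(t_h ∘ x)' = -‖∇t_h‖²`, which drives `t_h`, and hence the trajectory, to zero.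
-/

theorem List.sum_map_sq_nonneg {α : Type*} (l : List α) (g : α → ℝ) :
    0 ≤ (l.map fun a => g a ^ 2).sum :=
  List.sum_nonneg (by simp only [List.mem_map]; rintro _ ⟨a, -, rfl⟩; positivity)

theorem List.sum_map_sq_eq_zero_iff {α : Type*} (l : List α) (g : α → ℝ) :
    (l.map fun a => g a ^ 2).sum = 0 ↔ ∀ a ∈ l, g a = 0 := by
  induction l with
  | nil => simp
  | cons a l ih =>
    simp [add_eq_zero_iff_of_nonneg (sq_nonneg _) (l.sum_map_sq_nonneg g), ih]

theorem Differentiable.list_sum_map {ι E : Type*} [NormedAddCommGroup E] [NormedSpace ℝ E]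
    (l : List ι) {g : ι → E → ℝ} (hg : ∀ i ∈ l, Differentiable ℝ (g i)) :
    Differentiable ℝ fun z => (l.map fun i => g i z).sum := by
  induction l with
  | nil => simp
  | cons a l ih =>
    simpa using (hg a List.mem_cons_self).fun_add (ih fun i hi => hg i (List.mem_cons_of_mem _ hi))

theorem fderiv_apply_eq_of_eventually_comp_eq_pow_mul {E : Type*} [NormedAddCommGroup E]
    [NormedSpace ℝ E] {f : E → ℝ} {γ : ℝ → E} {v : E} (k : ℕ) (hf : DifferentiableAt ℝ f (γ 1))
    (hγ : HasDerivAt γ v 1) (hhom : ∀ᶠ c in 𝓝 1, f (γ c) = c ^ k * f (γ 1)) :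
    fderiv ℝ f (γ 1) v = k * f (γ 1) := by
  have hpow : HasDerivAt (fun c : ℝ => c ^ k * f (γ 1)) (k * f (γ 1)) 1 := by
    simpa using (hasDerivAt_pow k 1).mul_const (f (γ 1))
  exact (hf.hasFDerivAt.comp_hasDerivAt 1 hγ).unique (hpow.congr_of_eventuallyEq hhom)

theorem abs_sin_lt_one_of_abs_lt {u : ℝ} (hu : |u| < π / 2) : |sin u| < 1 := by
  have hcos : 0 < cos u := cos_pos_of_mem_Ioo (abs_lt.mp hu)
  rw [← sq_lt_one_iff_abs_lt_one]
  nlinarith [sin_sq_add_cos_sq u]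

theorem hasDerivAt_arcsin_mul_sin {u : ℝ} (hu : |u| < π / 2) :
    HasDerivAt (fun c => arcsin (c * sin u)) (tan u) 1 := by
  obtain ⟨hl, hr⟩ := abs_lt.mp (abs_sin_lt_one_of_abs_lt hu)
  have h := (hasDerivAt_arcsin (x := 1 * sin u) (by linarith) (by linarith)).comp 1
    (hasDerivAt_mul_const (sin u))
  obtain ⟨hul, hur⟩ := abs_lt.mp hu
  rwa [one_mul, ← cos_eq_sqrt_one_sub_sin_sq hul.le hur.le, one_div_mul_eq_div,
    ← tan_eq_sin_div_cos] at h

theorem abs_tan_le_two_mul_abs {u : ℝ} (hu : |u| ≤ 1 / 2) : |tan u| ≤ 2 * |u| := by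
  have hcos : 1 - u ^ 2 / 2 ≤ cos u := one_sub_sq_div_two_le_cos
  have hu2 : u ^ 2 ≤ 1 / 4 := by rw [← sq_abs]; nlinarith [abs_nonneg u]
  have hcos_pos : 0 < cos u := by linarith
  rw [tan_eq_sin_div_cos, abs_div, abs_of_pos hcos_pos, div_le_iff₀ hcos_pos]
  nlinarith [abs_sin_le_abs (x := u), abs_nonneg u]

theorem not_locallyAttractive_of_frequently_eq_zero {E : Type*} [NormedAddCommGroup E]
    [NormedSpace ℝ E] {F : E → E} (h : ∃ᶠ z in 𝓝[≠] 0, F z = 0) : ¬ LocallyAttractive F := by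
  rintro ⟨δ, hδ, hattr⟩
  obtain ⟨z, hFz, hz0, hzδ⟩ := (h.and_eventually (inter_mem_nhdsWithin _
    (Metric.ball_mem_nhds 0 hδ))).exists
  have hconst : IsSolutionOn F (fun _ => z) (Ici 0) := fun t _ => by
    simpa [hFz] using hasDerivAt_const t z
  exact hz0 (tendsto_nhds_unique tendsto_const_nhds (hattr _ hconst (by simpa using hzδ)))

theorem exists_pos_forall_le_of_le_norm_le {E : Type*} [NormedAddCommGroup E] [ProperSpace E]
    {f : E → ℝ} (hf : Continuous f) {R : ℝ} (hpos : ∀ z, z ≠ 0 → ‖z‖ ≤ R → 0 < f z)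
    {ε : ℝ} (hε : 0 < ε) : ∃ m > 0, ∀ z, ε ≤ ‖z‖ → ‖z‖ ≤ R → m ≤ f z := by
  have hK : IsCompact (Metric.closedBall (0 : E) R ∩ {z | ε ≤ ‖z‖}) :=
    (isCompact_closedBall 0 R).inter_right (isClosed_le continuous_const continuous_norm)
  obtain ⟨m, hm, hmK⟩ := hK.exists_forall_le' hf.continuousOn (a := 0) fun z ⟨hzR, hzε⟩ =>
    hpos z (norm_pos_iff.mp (hε.trans_le hzε)) (by simpa using hzR)
  exact ⟨m, hm, fun z hzε hzR => hmK z ⟨by simpa using hzR, hzε⟩⟩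

section Gradient

variable {E : Type*} [NormedAddCommGroup E] [InnerProductSpace ℝ E] [CompleteSpace E]
  {f : E → ℝ}

theorem fderiv_apply_eq_inner_gradient (z v : E) : fderiv ℝ f z v = ⟪gradient f z, v⟫_ℝ := by
  rw [← toDual_gradient, toDual_apply_apply]

theorem IsLocalMin.gradient_eq_zero {z : E} (h : IsLocalMin f z) : gradient f z = 0 := by
  rw [gradient, h.fderiv_eq_zero, map_zero]

variable {x : ℝ → E} {I : Set ℝ}

theorem hasDerivAt_comp_of_isSolutionOn_neg_gradient (hf : Differentiable ℝ f)
    (hx : IsSolutionOn (fun z => -gradient f z) x I) {t : ℝ} (ht : t ∈ I) :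
    HasDerivAt (fun s => f (x s)) (-‖gradient f (x t)‖ ^ 2) t := by
  have h := (hf (x t)).hasFDerivAt.comp_hasDerivAt t (hx t ht)
  rwa [fderiv_apply_eq_inner_gradient, inner_neg_right, real_inner_self_eq_norm_sq] at h

theorem antitoneOn_comp_of_isSolutionOn_neg_gradient (hf : Differentiable ℝ f)
    (hI : Convex ℝ I) (hx : IsSolutionOn (fun z => -gradient f z) x I) :
    AntitoneOn (fun s => f (x s)) I := by
  have hd := fun t (ht : t ∈ I) => hasDerivAt_comp_of_isSolutionOn_neg_gradient hf hx ht
  refine antitoneOn_of_deriv_nonpos hI (fun t ht => (hd t ht).continuousAt.continuousWithinAt)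
    (fun t ht => (hd t (interior_subset ht)).differentiableAt.differentiableWithinAt)
    fun t ht => ?_
  rw [(hd t (interior_subset ht)).deriv]
  exact neg_nonpos.mpr (sq_nonneg _)

/-- A gradient lower bound `c f ≤ ‖∇f‖` (a Łojasiewicz inequality with exponent one) makes `f`
decrease along the flow at a uniform rate as long as `f ≥ a`, so `f` falls below every `a > 0`. -/
theorem exists_comp_lt_of_isSolutionOn_neg_gradient (hf : Differentiable ℝ f) {r c : ℝ}
    (hgrad : ∀ z, ‖z‖ ≤ r → c * f z ≤ ‖gradient f z‖) (hc : 0 < c)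
    (hx : IsSolutionOn (fun z => -gradient f z) x (Ici 0)) (hxr : ∀ t ≥ 0, ‖x t‖ ≤ r)
    {a : ℝ} (ha : 0 < a) : ∃ T ≥ 0, f (x T) < a := by
  by_contra! hge
  have hd := fun t (ht : t ∈ Ici (0 : ℝ)) => hasDerivAt_comp_of_isSolutionOn_neg_gradient hf hx ht
  have hslope : ∀ t ∈ interior (Ici (0 : ℝ)), deriv (fun s => f (x s)) t ≤ -(c * a) ^ 2 := by
    intro t ht
    have ht := interior_subset ht
    rw [(hd t ht).deriv, neg_le_neg_iff]
    have hct := hgrad _ (hxr t ht)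
    have hat := hge t ht
    gcongr
    nlinarith
  set T := f (x 0) / (c * a) ^ 2 + 1
  have hT : 0 ≤ T := add_nonneg (div_nonneg (ha.le.trans (hge 0 le_rfl)) (sq_nonneg _)) zero_le_one
  have hdecr := (convex_Ici 0).image_sub_le_mul_sub_of_deriv_le
    (fun t ht => (hd t ht).continuousAt.continuousWithinAt)
    (fun t ht => (hd t (interior_subset ht)).differentiableAt.differentiableWithinAt)
    hslope 0 self_mem_Ici T hT hT
  have hTval : (c * a) ^ 2 * T = f (x 0) + (c * a) ^ 2 := by
    simp only [T]; field_simp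
  nlinarith [hge T hT]

end Gradient

section Lyapunov

variable {E : Type*} [NormedAddCommGroup E] [InnerProductSpace ℝ E] [FiniteDimensional ℝ E]
  {f : E → ℝ}

/-- On the sphere of radius `ρ` the function `f` is bounded below by some `m > 0`; a trajectory
starting where `f < m` cannot reach that sphere since `f` decreases along it. -/
theorem exists_pos_forall_norm_lt_of_isSolutionOn_neg_gradient (hf : Differentiable ℝ f)
    (hf0 : f 0 = 0) {ρ : ℝ} (hρ : 0 < ρ) (hpos : ∀ z, z ≠ 0 → ‖z‖ ≤ ρ → 0 < f z) :
    ∃ δ > 0, ∀ (T : ℝ) (x : ℝ → E), IsSolutionOn (fun z => -gradient f z) x (Icc 0 T) →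
      ‖x 0‖ < δ → ∀ t ∈ Icc 0 T, ‖x t‖ < ρ := by
  obtain ⟨m, hm, hmρ⟩ := exists_pos_forall_le_of_le_norm_le hf.continuous hpos hρ
  have hsmall : ∀ᶠ z in 𝓝 0, f z < m :=
    hf.continuous.continuousAt.eventually_lt continuousAt_const (by rwa [hf0])
  obtain ⟨δ, hδ, hball⟩ := Metric.eventually_nhds_iff_ball.mp hsmall
  refine ⟨min δ ρ, lt_min hδ hρ, fun T x hx hx0 t ht => ?_⟩
  by_contra! hρt
  have hcont : ContinuousOn (fun s => ‖x s‖) (Icc 0 t) := fun s hs =>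
    (hx s ⟨hs.1, hs.2.trans ht.2⟩).continuousAt.norm.continuousWithinAt
  obtain ⟨s, hs, hxs⟩ := intermediate_value_Icc ht.1 hcont
    ⟨(hx0.trans_le (min_le_right _ _)).le, hρt⟩
  have hfs : f (x s) ≤ f (x 0) := antitoneOn_comp_of_isSolutionOn_neg_gradient hf
    (convex_Icc 0 T) hx ⟨le_rfl, ht.1.trans ht.2⟩ ⟨hs.1, hs.2.trans ht.2⟩ hs.1
  have hms := hmρ (x s) hxs.ge hxs.le
  have hf0m := hball (x 0) (mem_ball_zero_iff.mpr (hx0.trans_le (min_le_left _ _)))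
  linarith

theorem lyapunovStable_neg_gradient (hf : Differentiable ℝ f) (hf0 : f 0 = 0) {r : ℝ}
    (hr : 0 < r) (hpos : ∀ z, z ≠ 0 → ‖z‖ ≤ r → 0 < f z) :
    LyapunovStable (fun z => -gradient f z) := by
  intro ε hε
  obtain ⟨δ, hδ, htrap⟩ := exists_pos_forall_norm_lt_of_isSolutionOn_neg_gradient hf hf0
    (lt_min hε hr) fun z hz hzρ => hpos z hz (hzρ.trans (min_le_right _ _))
  exact ⟨δ, hδ, fun T x hx hx0 t ht => (htrap T x hx hx0 t ht).trans_le (min_le_left _ _)⟩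

theorem locallyAttractive_neg_gradient (hf : Differentiable ℝ f) (hf0 : f 0 = 0) {r c : ℝ}
    (hr : 0 < r) (hpos : ∀ z, z ≠ 0 → ‖z‖ ≤ r → 0 < f z) (hc : 0 < c)
    (hgrad : ∀ z, ‖z‖ ≤ r → c * f z ≤ ‖gradient f z‖) :
    LocallyAttractive (fun z => -gradient f z) := by
  obtain ⟨δ, hδ, htrap⟩ := exists_pos_forall_norm_lt_of_isSolutionOn_neg_gradient hf hf0 hr hpos
  refine ⟨δ, hδ, fun x hx hx0 => ?_⟩
  have hxr : ∀ t ≥ 0, ‖x t‖ < r := fun t ht =>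
    htrap t x (fun s hs => hx s hs.1) hx0 t ⟨ht, le_rfl⟩
  rw [Metric.tendsto_atTop]
  intro ε hε
  obtain ⟨m, hm, hmε⟩ := exists_pos_forall_le_of_le_norm_le hf.continuous hpos hε
  obtain ⟨T, hT, hfT⟩ := exists_comp_lt_of_isSolutionOn_neg_gradient hf hgrad hc hx
    (fun t ht => (hxr t ht).le) hm
  refine ⟨T, fun t ht => ?_⟩
  rw [dist_zero_right]
  by_contra! hεt
  have hft : f (x t) ≤ f (x T) := antitoneOn_comp_of_isSolutionOn_neg_gradient hf
    (convex_Ici 0) hx hT (hT.trans ht) ht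
  have hmt := hmε (x t) hεt (hxr t (hT.trans ht)).le
  linarith

end Lyapunov

section HomogenizedPolynomial

variable {n : ℕ} {φ : List (Clause3 n)} {z w : EuclideanSpace ℝ (Fin (n + 1))}

theorem differentiable_tHom (φ : List (Clause3 n)) : Differentiable ℝ (tHom φ) := by
  have hsin : ∀ k, Differentiable ℝ fun z : EuclideanSpace ℝ (Fin (n + 1)) => sin (z k) :=
    fun k => differentiable_sin.comp (PiLp.proj 2 (fun _ => ℝ) k).differentiable
  have hlit : ∀ l : Lit n, Differentiable ℝ fun z => homLitVal z l := by
    rintro ⟨i, _ | _⟩ <;> simp only [homLitVal, Bool.false_eq_true, if_false, if_true] <;> fun_prop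
  exact .add (by fun_prop) (.list_sum_map φ fun c _ => by fun_prop)

theorem tHom_nonneg (φ : List (Clause3 n)) (z : EuclideanSpace ℝ (Fin (n + 1))) :
    0 ≤ tHom φ z :=
  add_nonneg (Finset.sum_nonneg fun _ _ => by positivity) (List.sum_map_sq_nonneg _ _)

theorem tHom_zero (φ : List (Clause3 n)) : tHom φ 0 = 0 := by
  simp [tHom, homLitVal]

theorem tHom_eq_zero_iff : tHom φ z = 0 ↔
    (∀ i : Fin n, sin (z i.castSucc) = 0 ∨ sin (z i.castSucc) = sin (z (Fin.last n))) ∧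
    ∀ c ∈ φ,
      homLitVal z c.1 + homLitVal z c.2.1 + homLitVal z c.2.2 = sin (z (Fin.last n)) ^ 2 := by
  rw [tHom, add_eq_zero_iff_of_nonneg (Finset.sum_nonneg fun _ _ => by positivity)
    (List.sum_map_sq_nonneg _ _), Finset.sum_eq_zero_iff_of_nonneg fun _ _ => by positivity,
    List.sum_map_sq_eq_zero_iff]
  simp only [Finset.mem_univ, true_implies, mul_eq_zero, ne_eq, OfNat.ofNat_ne_zero,
    not_false_eq_true, pow_eq_zero_iff, sub_eq_zero, @eq_comm ℝ (sin (z (Fin.last n)))]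

theorem homLitVal_eq_litVal_mul (β : Fin n → ℝ)
    (hβ : ∀ i, sin (z i.castSucc) = β i * sin (z (Fin.last n))) (l : Lit n) :
    homLitVal z l = litVal β l * sin (z (Fin.last n)) ^ 2 := by
  rcases l with ⟨i, _ | _⟩ <;> simp only [homLitVal, litVal, Bool.false_eq_true, if_false,
    if_true, hβ] <;> ring

theorem homClauseVal_eq_clauseVal_mul (β : Fin n → ℝ)
    (hβ : ∀ i, sin (z i.castSucc) = β i * sin (z (Fin.last n))) (c : Clause3 n) :
    homLitVal z c.1 + homLitVal z c.2.1 + homLitVal z c.2.2 =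
      clauseVal β c * sin (z (Fin.last n)) ^ 2 := by
  simp only [homLitVal_eq_litVal_mul β hβ, clauseVal]
  ring

theorem exists_oneInThreeSat_of_tHom_eq_zero (h : tHom φ z = 0)
    (hy : sin (z (Fin.last n)) ≠ 0) : ∃ b : Fin n → Bool, OneInThreeSat b φ := by
  obtain ⟨hdich, hclause⟩ := tHom_eq_zero_iff.mp h
  set b : Fin n → Bool := fun i => decide (sin (z i.castSucc) = sin (z (Fin.last n)))
  have hβ : ∀ i, sin (z i.castSucc) = boolToReal b i * sin (z (Fin.last n)) := fun i => by
    rcases hdich i with h0 | h1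
    · simp [boolToReal, b, h0, Ne.symm hy]
    · simp [boolToReal, b, h1]
  refine ⟨b, fun c hc => ?_⟩
  have hsum := hclause c hc
  rwa [homClauseVal_eq_clauseVal_mul _ hβ, mul_eq_right₀ (pow_ne_zero 2 hy)] at hsum

theorem tHom_pos (hns : ¬∃ b : Fin n → Bool, OneInThreeSat b φ) (hz : z ≠ 0) (hzπ : ‖z‖ < π) :
    0 < tHom φ z := by
  refine (tHom_nonneg φ z).lt_of_ne' fun h => ?_
  by_cases hy : sin (z (Fin.last n)) = 0
  · have hsin : ∀ k, sin (z k) = 0 := Fin.lastCases hy fun i =>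
      ((tHom_eq_zero_iff.mp h).1 i).elim id (·.trans hy)
    refine hz (PiLp.ext fun k => ?_)
    have hk : |z k| < π := (PiLp.norm_apply_le z k).trans_lt hzπ
    exact (sin_eq_zero_iff_of_lt_of_lt (abs_lt.mp hk).1 (abs_lt.mp hk).2).mp (hsin k)
  · exact hns (exists_oneInThreeSat_of_tHom_eq_zero h hy)

def satPoint (b : Fin n → Bool) : EuclideanSpace ℝ (Fin (n + 1)) :=
  WithLp.toLp 2 (Fin.snoc (boolToReal b) 1)

theorem tHom_smul_satPoint {b : Fin n → Bool} (hb : OneInThreeSat b φ) (s : ℝ) :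
    tHom φ (s • satPoint b) = 0 := by
  have hβ : ∀ i, sin ((s • satPoint b) i.castSucc) =
      boolToReal b i * sin ((s • satPoint b) (Fin.last n)) := fun i => by
    cases hbi : b i <;> simp [satPoint, boolToReal, hbi]
  refine tHom_eq_zero_iff.mpr ⟨fun i => ?_, fun c hc => ?_⟩
  · rw [hβ i]
    cases hbi : b i <;> simp [boolToReal, hbi]
  · rw [homClauseVal_eq_clauseVal_mul _ hβ, hb c hc, one_mul]

theorem frequently_tHom_eq_zero {b : Fin n → Bool} (hb : OneInThreeSat b φ) :
    ∃ᶠ z in 𝓝[≠] 0, tHom φ z = 0 := by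
  have hp : satPoint b ≠ 0 := fun h => by
    simpa [satPoint] using congr($h (Fin.last n))
  have hlim : Tendsto (fun s : ℝ => s • satPoint b) (𝓝[≠] 0) (𝓝[≠] 0) :=
    tendsto_nhdsWithin_of_tendsto_nhds_of_eventually_within _
      ((continuous_id.smul continuous_const).tendsto' 0 0 (zero_smul _ _) |>.mono_left
        nhdsWithin_le_nhds)
      (eventually_nhdsWithin_of_forall fun s hs => smul_ne_zero hs hp)
  exact hlim.frequently (Frequently.of_forall fun s => tHom_smul_satPoint hb s)

theorem homLitVal_of_sin_eq_mul {c : ℝ} (h : ∀ k, sin (w k) = c * sin (z k)) (l : Lit n) :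
    homLitVal w l = c ^ 2 * homLitVal z l := by
  rcases l with ⟨i, _ | _⟩ <;> simp only [homLitVal, Bool.false_eq_true, if_false, if_true, h] <;>
    ring

theorem tHom_of_sin_eq_mul {c : ℝ} (h : ∀ k, sin (w k) = c * sin (z k)) :
    tHom φ w = c ^ 4 * tHom φ z := by
  simp only [tHom, homLitVal_of_sin_eq_mul h, h, mul_add, Finset.mul_sum, ← List.sum_map_mul_left]
  congr 1
  · exact Finset.sum_congr rfl fun _ _ => by ring
  · exact congrArg List.sum (List.map_congr_left fun _ _ => by ring)

/-- Euler's identity for the quartic homogeneity of `t_h` in the variables `sin zₖ`, along the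
curve `c ↦ arcsin (c sin zₖ)` whose velocity at `c = 1` is `tan zₖ`. -/
theorem fderiv_tHom_tan (hz : ∀ k, |z k| < π / 2) :
    fderiv ℝ (tHom φ) z (WithLp.toLp 2 fun k => tan (z k)) = 4 * tHom φ z := by
  set γ : ℝ → EuclideanSpace ℝ (Fin (n + 1)) := fun c =>
    WithLp.toLp 2 fun k => arcsin (c * sin (z k))
  have hγ1 : γ 1 = z := PiLp.ext fun k => by
    obtain ⟨hl, hr⟩ := abs_lt.mp (hz k)
    simp [γ, arcsin_sin hl.le hr.le]
  have hγ : HasDerivAt γ (WithLp.toLp 2 fun k => tan (z k)) 1 :=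
    (PiLp.hasFDerivAt_toLp 2 _).comp_hasDerivAt 1
      (hasDerivAt_pi.mpr fun k => hasDerivAt_arcsin_mul_sin (hz k))
  have hsmall : ∀ᶠ c in 𝓝 (1 : ℝ), ∀ k, |c * sin (z k)| < 1 := eventually_all.mpr fun k =>
    (continuous_id.mul continuous_const).abs.continuousAt.eventually_lt continuousAt_const
      (by simpa using abs_sin_lt_one_of_abs_lt (hz k))
  have hhom : ∀ᶠ c in 𝓝 (1 : ℝ), tHom φ (γ c) = c ^ 4 * tHom φ (γ 1) := by
    filter_upwards [hsmall] with c hc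
    rw [hγ1]
    refine tHom_of_sin_eq_mul fun k => ?_
    obtain ⟨hl, hr⟩ := abs_lt.mp (hc k)
    exact sin_arcsin hl.le hr.le
  have hEuler := fderiv_apply_eq_of_eventually_comp_eq_pow_mul 4
    (hγ1 ▸ differentiable_tHom φ z) hγ hhom
  rw [hγ1] at hEuler
  exact_mod_cast hEuler

theorem four_mul_tHom_le_norm_gradient (hz : ‖z‖ ≤ 1 / 2) :
    4 * tHom φ z ≤ ‖gradient (tHom φ) z‖ := by
  set v : EuclideanSpace ℝ (Fin (n + 1)) := WithLp.toLp 2 fun k => tan (z k)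
  have hzk : ∀ k, |z k| ≤ 1 / 2 := fun k => (PiLp.norm_apply_le z k).trans hz
  have hv : ‖v‖ ≤ 1 := by
    have hsq : ‖v‖ ^ 2 ≤ (2 * ‖z‖) ^ 2 := by
      rw [mul_pow, EuclideanSpace.real_norm_sq_eq, EuclideanSpace.real_norm_sq_eq, Finset.mul_sum]
      gcongr with k
      rw [← sq_abs, ← sq_abs (z k), ← mul_pow]
      exact pow_le_pow_left₀ (abs_nonneg _) (abs_tan_le_two_mul_abs (hzk k)) 2
    nlinarith [norm_nonneg v, norm_nonneg z]
  calc 4 * tHom φ z = fderiv ℝ (tHom φ) z v :=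
        (fderiv_tHom_tan fun k => (hzk k).trans_lt (by linarith [pi_gt_three])).symm
    _ = ⟪gradient (tHom φ) z, v⟫_ℝ := fderiv_apply_eq_inner_gradient z v
    _ ≤ ‖gradient (tHom φ) z‖ * ‖v‖ := real_inner_le_norm _ _
    _ ≤ ‖gradient (tHom φ) z‖ := mul_le_of_le_one_right (norm_nonneg _) hv

end HomogenizedPolynomial

theorem stmt4 {n : ℕ} (φ : List (Clause3 n)) :
    LAS (fun z => -gradient (tHom φ) z) ↔ ¬ ∃ b : Fin n → Bool, OneInThreeSat b φ := by
  constructor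
  · rintro ⟨-, hattr⟩ ⟨b, hb⟩
    refine not_locallyAttractive_of_frequently_eq_zero ?_ hattr
    refine (frequently_tHom_eq_zero hb).mono fun z hz => ?_
    have hmin : IsLocalMin (tHom φ) z := .of_forall fun w => hz ▸ tHom_nonneg φ w
    rw [hmin.gradient_eq_zero, neg_zero]
  · intro hns
    have hpos : ∀ z, z ≠ 0 → ‖z‖ ≤ 1 / 2 → 0 < tHom φ z := fun z hz hz2 =>
      tHom_pos hns hz (by linarith [pi_gt_three])
    exact ⟨lyapunovStable_neg_gradient (differentiable_tHom φ) (tHom_zero φ) one_half_pos hpos,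
      locallyAttractive_neg_gradient (differentiable_tHom φ) (tHom_zero φ) one_half_pos hpos
        four_pos fun z hz => four_mul_tHom_le_norm_gradient hz⟩
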